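/- KKT cardinality inequality for Type-A GRESH minimizers (key optimization inequality in the proof of Theorem 2): Let λ₁, λ₂ > 0 and suppose X̆ ≠ 0. Let Ω̂ = [b̂, Φ̂ᵀ]ᵀ be any global minimizer of F(Ω) = (1/2)‖y − Xb − X̄ vec(Φ)‖₂² + λ₁‖X̆‖₂‖Φ‖₁ + λ₂‖X̆‖₂‖Ωᵀ‖_{2,1} over Ω = [b, Φᵀ]ᵀ ∈ ℝ^{(p+1)×p} subject to Φ = Φᵀ. Let Ĵ ⊆ {1,…,p²+p} be the support of vec(Ω̂) under the column indexing of X̆ (so that X̆ vec(Ω̂) = X̆_Ĵ (vec Ω̂)_Ĵ, where X̆_Ĵ is the submatrix of the columns of X̆ indexed by Ĵ). Then λ₁² · J_e(Φ̂) + λ₂² · J_G(b̂, Φ̂) ≤ (2/‖X̆‖₂²) · ‖X̆_Ĵᵀ (X̆ vec(Ω̂) − y)‖₂². -/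

import Mathlib

open Matrix MeasureTheory ProbabilityTheory
open scoped Classical

noncomputable section

/-- Spectral norm (ℓ₂ operator norm) of a real matrix:
the supremum of `‖A v‖₂` over vectors `v` with `‖v‖₂ ≤ 1`. -/
def specNorm {ι κ : Type*} [Fintype ι] [Fintype κ] (A : Matrix ι κ ℝ) : ℝ :=
  sSup {c : ℝ | ∃ v : κ → ℝ, (∑ i, v i ^ 2) ≤ 1 ∧
    c = Real.sqrt (∑ i, A.mulVec v i ^ 2)}

/-- The augmented design `X̆ ∈ ℝ^{n×(p²+p)}`: for each `j`, its columns are `x_j`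
followed by `x_j ⊙ x_1, …, x_j ⊙ x_p` (column indices are pairs `(j,k)` with
`k = 0` for `x_j` and `k ≥ 1` for `x_j ⊙ x_k`). -/
def Xbreve {n p : ℕ} (X : Matrix (Fin n) (Fin p) ℝ) :
    Matrix (Fin n) (Fin p × Fin (p + 1)) ℝ :=
  fun i jk => Fin.cases (X i jk.1) (fun k => X i jk.1 * X i k) jk.2

/-- `X b + X̄ vec(Φ)`, where `X̄` has columns `x_j ⊙ x_k`. -/
def Mmap {n p : ℕ} (X : Matrix (Fin n) (Fin p) ℝ) (b : Fin p → ℝ)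
    (Φ : Matrix (Fin p) (Fin p) ℝ) : Fin n → ℝ :=
  fun i => X.mulVec b i + ∑ jk : Fin p × Fin p, Φ jk.1 jk.2 * (X i jk.1 * X i jk.2)

/-- `J_e(Φ)`: number of nonzero entries of `Φ`. -/
def JeCount {p : ℕ} (Φ : Matrix (Fin p) (Fin p) ℝ) : ℕ :=
  (Finset.univ.filter fun jk : Fin p × Fin p => Φ jk.1 jk.2 ≠ 0).card

/-- `J_G(b, Φ)`: number of indices `j` with `b_j² + ‖φ_j‖₂² ≠ 0`
(`φ_j` the `j`-th column of `Φ`). -/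
def JGCount {p : ℕ} (b : Fin p → ℝ) (Φ : Matrix (Fin p) (Fin p) ℝ) : ℕ :=
  (Finset.univ.filter fun j : Fin p => b j ≠ 0 ∨ ∃ k, Φ k j ≠ 0).card

/-- Euclidean norm of the `j`-th column `(b_j, φ_jᵀ)ᵀ` of `Ω = [b, Φᵀ]ᵀ`. -/
def grpNorm {p : ℕ} (b : Fin p → ℝ) (Φ : Matrix (Fin p) (Fin p) ℝ) (j : Fin p) : ℝ :=
  Real.sqrt (b j ^ 2 + ∑ k, Φ k j ^ 2)

/-- The Type-A GRESH criterion
`F(Ω) = (1/2)‖y − Xb − X̄vec(Φ)‖₂² + λ₁‖X̆‖₂‖Φ‖₁ + λ₂‖X̆‖₂‖Ωᵀ‖_{2,1}`. -/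
def Fgresh {n p : ℕ} (X : Matrix (Fin n) (Fin p) ℝ) (y : Fin n → ℝ)
    (lam1 lam2 : ℝ) (b : Fin p → ℝ) (Φ : Matrix (Fin p) (Fin p) ℝ) : ℝ :=
  (1 / 2) * (∑ i, (y i - Mmap X b Φ i) ^ 2)
    + lam1 * specNorm (Xbreve X) * (∑ j, ∑ k, |Φ j k|)
    + lam2 * specNorm (Xbreve X) * ∑ j, grpNorm b Φ j

/-- The law of `ε`: `n`-fold product of the Gaussian `N(0, σ²)`. -/
def gaussPi (n : ℕ) (σ : ℝ) : Measure (Fin n → ℝ) :=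
  Measure.pi fun _ : Fin n => gaussianReal 0 ⟨σ ^ 2, sq_nonneg σ⟩

/-- The coefficient vector of `Ω = [b, Φᵀ]ᵀ` under the column indexing of `X̆`:
entry `(j,0)` is `b_j` and entry `(j,k)` for `k ≥ 1` is `Φ_{jk}`,
so that `X̆ vec(Ω) = X b + X̄ vec(Φ)`. -/
def vecBF {p : ℕ} (b : Fin p → ℝ) (Φ : Matrix (Fin p) (Fin p) ℝ) :
    Fin p × Fin (p + 1) → ℝ :=
  fun jk => Fin.cases (b jk.1) (fun k => Φ jk.1 k) jk.2

/-! At a minimizer `Ω̂`, the criterion restricted to a line `t ↦ Ω̂ + tΔ`, with `Δ` symmetric and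
supported in the support of `Ω̂`, is differentiable at `t = 0`: every `|Φ̂_jk|` and every group norm
`N_j = ‖Ω̂_j‖₂` that moves is nonzero. Its derivative therefore vanishes. With `r = X̆ vec(Ω̂) − y` and
`s = ‖X̆‖₂`, the direction `e_j` in `b` gives `(X̆ᵀr)_(j,0) = −λ₂ s b̂_j / N_j`, and the symmetric
direction `E_jk + E_kj` gives `(X̆ᵀr)_(j,k) = −s (λ₁ sign Φ̂_jk + λ₂ Φ̂_jk (1/N_j + 1/N_k) / 2)`.
Squaring and dropping the nonnegative cross terms, the sum of `(X̆ᵀr)_u²` over the support is at least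
`s² λ₁² J_e + s² λ₂² Σ_j (b̂_j² + ‖φ̂_j‖²/2) / N_j²`, where `Φ̂ = Φ̂ᵀ` is used to collect the
interaction terms column by column; every active group contributes at least `1/2` to the last sum. -/

lemma Mmap_add_smul {n p : ℕ} (X : Matrix (Fin n) (Fin p) ℝ) (b δb : Fin p → ℝ)
    (Φ δΦ : Matrix (Fin p) (Fin p) ℝ) (t : ℝ) (i : Fin n) :
    Mmap X (b + t • δb) (Φ + t • δΦ) i = Mmap X b Φ i + t * Mmap X δb δΦ i := by
  simp only [Mmap, mulVec_add, mulVec_smul, Pi.add_apply, Pi.smul_apply, Matrix.add_apply,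
    Matrix.smul_apply, smul_eq_mul, add_mul, Finset.sum_add_distrib, mul_add, Finset.mul_sum,
    mul_assoc]
  ring

lemma Mmap_single_zero {n p : ℕ} (X : Matrix (Fin n) (Fin p) ℝ) (j : Fin p) (i : Fin n) :
    Mmap X (Pi.single j 1) 0 i = X i j := by
  simp [Mmap]

lemma Mmap_zero_single_add_single {n p : ℕ} (X : Matrix (Fin n) (Fin p) ℝ) (j k : Fin p)
    (i : Fin n) : Mmap X 0 (single j k 1 + single k j 1) i = 2 * (X i j * X i k) := by
  simp only [Mmap, mulVec_zero, Pi.zero_apply, Matrix.add_apply, single_apply, ite_and, add_mul,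
    ite_mul, one_mul, zero_mul, Finset.sum_add_distrib, Fintype.sum_prod_type,
    Finset.sum_ite_irrel, Finset.sum_ite_eq, Finset.mem_univ, ↓reduceIte, Finset.sum_const_zero,
    zero_add]
  ring

lemma Xbreve_mulVec_vecBF {n p : ℕ} (X : Matrix (Fin n) (Fin p) ℝ) (b : Fin p → ℝ)
    (Φ : Matrix (Fin p) (Fin p) ℝ) : Xbreve X *ᵥ vecBF b Φ = Mmap X b Φ := by
  ext i
  simp [mulVec, dotProduct, Xbreve, vecBF, Mmap, Fintype.sum_prod_type, Fin.sum_univ_succ,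
    Finset.sum_add_distrib, mul_comm]

lemma grpNorm_nonneg {p : ℕ} (b : Fin p → ℝ) (Φ : Matrix (Fin p) (Fin p) ℝ) (j : Fin p) :
    0 ≤ grpNorm b Φ j :=
  Real.sqrt_nonneg _

lemma grpNorm_sq {p : ℕ} (b : Fin p → ℝ) (Φ : Matrix (Fin p) (Fin p) ℝ) (j : Fin p) :
    grpNorm b Φ j ^ 2 = b j ^ 2 + ∑ k, Φ k j ^ 2 :=
  Real.sq_sqrt (by positivity)

lemma grpNorm_eq_zero_iff {p : ℕ} {b : Fin p → ℝ} {Φ : Matrix (Fin p) (Fin p) ℝ} {j : Fin p} :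
    grpNorm b Φ j = 0 ↔ b j = 0 ∧ ∀ k, Φ k j = 0 := by
  rw [grpNorm, Real.sqrt_eq_zero (by positivity), add_eq_zero_iff_of_nonneg (by positivity)
    (by positivity), Finset.sum_eq_zero_iff_of_nonneg (fun k _ => by positivity)]
  simp

lemma sign_sq_of_ne_zero {α : Type*} [Ring α] [LinearOrder α] [IsStrictOrderedRing α] {x : α}
    (hx : x ≠ 0) : (SignType.sign x : α) ^ 2 = 1 := by
  rcases hx.lt_or_gt with h | h <;> simp [h]

lemma specNorm_pos {ι κ : Type*} [Fintype ι] [Fintype κ] {A : Matrix ι κ ℝ} (hA : A ≠ 0) :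
    0 < specNorm A := by
  obtain ⟨i₀, u₀, hA₀⟩ : ∃ i u, A i u ≠ 0 := by
    by_contra! h
    exact hA (Matrix.ext fun i u => h i u)
  have hbdd : BddAbove {c : ℝ | ∃ v : κ → ℝ, (∑ i, v i ^ 2) ≤ 1 ∧
      c = Real.sqrt (∑ i, A.mulVec v i ^ 2)} := by
    refine ⟨Real.sqrt (∑ i, ∑ u, A i u ^ 2), ?_⟩
    rintro c ⟨v, hv, rfl⟩
    gcongr with i
    calc A.mulVec v i ^ 2 ≤ (∑ u, A i u ^ 2) * ∑ u, v u ^ 2 :=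
          Finset.sum_mul_sq_le_sq_mul_sq _ _ _
      _ ≤ ∑ u, A i u ^ 2 := mul_le_of_le_one_right (by positivity) hv
  refine lt_of_lt_of_le ?_
    (le_csSup hbdd ⟨Pi.single u₀ 1, by simp [Pi.single_apply, ite_pow], rfl⟩)
  refine Real.sqrt_pos.mpr (Finset.sum_pos' (fun i _ => sq_nonneg _) ⟨i₀, by simp, ?_⟩)
  simpa using pow_pos (abs_pos.mpr hA₀) 2

lemma sum_filter_vecBF_ne_zero {p : ℕ} {M : Type*} [AddCommMonoid M] (b : Fin p → ℝ)
    (Φ : Matrix (Fin p) (Fin p) ℝ) (f : Fin p × Fin (p + 1) → M) :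
    ∑ u ∈ Finset.univ.filter (fun u => vecBF b Φ u ≠ 0), f u
      = ∑ j ∈ Finset.univ.filter (fun j => b j ≠ 0), f (j, 0)
        + ∑ jk ∈ Finset.univ.filter (fun jk : Fin p × Fin p => Φ jk.1 jk.2 ≠ 0),
            f (jk.1, jk.2.succ) := by
  simp only [Finset.sum_filter, Fintype.sum_prod_type, Fin.sum_univ_succ, Finset.sum_add_distrib]
  rfl

lemma JGCount_le {p : ℕ} (b : Fin p → ℝ) (Φ : Matrix (Fin p) (Fin p) ℝ) :
    (JGCount b Φ : ℝ) ≤ ∑ j, (2 * b j ^ 2 + ∑ k, Φ k j ^ 2) / grpNorm b Φ j ^ 2 := by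
  rw [JGCount, Finset.natCast_card_filter]
  refine Finset.sum_le_sum fun j _ => ?_
  split_ifs with hj
  · have hN : grpNorm b Φ j ^ 2 ≠ 0 := pow_ne_zero 2 fun h0 => by
      simp_all [grpNorm_eq_zero_iff]
    rw [le_div_iff₀ (lt_of_le_of_ne (sq_nonneg _) hN.symm), one_mul, grpNorm_sq]
    nlinarith [sq_nonneg (b j)]
  · positivity

lemma sum_sq_div_grpNorm_sq {p : ℕ} (b : Fin p → ℝ) {Φ : Matrix (Fin p) (Fin p) ℝ}
    (hsym : Φ.IsSymm) :
    ∑ jk : Fin p × Fin p, (Φ jk.1 jk.2 ^ 2 / grpNorm b Φ jk.1 ^ 2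
        + Φ jk.1 jk.2 ^ 2 / grpNorm b Φ jk.2 ^ 2)
      = 2 * ∑ j, (∑ k, Φ k j ^ 2) / grpNorm b Φ j ^ 2 := by
  rw [Fintype.sum_prod_type]
  simp only [Finset.sum_add_distrib, Finset.sum_div]
  rw [Finset.sum_comm (f := fun j k => Φ j k ^ 2 / grpNorm b Φ k ^ 2)]
  simp only [hsym.apply]
  ring

lemma hasDerivAt_add_mul_sq (x d : ℝ) :
    HasDerivAt (fun t => (x + t * d) ^ 2) (2 * x * d) 0 := by
  simpa using (((hasDerivAt_id (0 : ℝ)).mul_const d).const_add x).fun_pow 2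

lemma hasDerivAt_abs_add_mul {x d : ℝ} (h : d ≠ 0 → x ≠ 0) :
    HasDerivAt (fun t => |x + t * d|) (SignType.sign x * d) 0 := by
  by_cases hd : d = 0
  · simpa [hd] using hasDerivAt_const (0 : ℝ) |x|
  · have hline : HasDerivAt (fun t => x + t * d) d 0 := by
      simpa using ((hasDerivAt_id (0 : ℝ)).mul_const d).const_add x
    exact (hasDerivAt_abs (h hd)).comp_of_eq 0 hline (by simp)

lemma hasDerivAt_grpNorm_line {p : ℕ} (b δb : Fin p → ℝ) (Φ δΦ : Matrix (Fin p) (Fin p) ℝ)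
    (j : Fin p) (h : grpNorm b Φ j = 0 → δb j = 0 ∧ ∀ k, δΦ k j = 0) :
    HasDerivAt (fun t : ℝ => grpNorm (b + t • δb) (Φ + t • δΦ) j)
      ((b j * δb j + ∑ k, Φ k j * δΦ k j) / grpNorm b Φ j) 0 := by
  by_cases hN : grpNorm b Φ j = 0
  · obtain ⟨hb, hΦ⟩ := h hN
    simpa [hN, hb, hΦ, grpNorm] using hasDerivAt_const (0 : ℝ) (grpNorm b Φ j)
  · have hq := (hasDerivAt_add_mul_sq (b j) (δb j)).fun_add
      (HasDerivAt.fun_sum (u := .univ) fun k _ => hasDerivAt_add_mul_sq (Φ k j) (δΦ k j))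
    have hN' : b j ^ 2 + ∑ k, Φ k j ^ 2 ≠ 0 := fun h0 => hN (by simp [grpNorm, h0])
    convert hq.sqrt (by simpa using hN') using 1
    · ext t; simp [grpNorm]
    · simp only [grpNorm, zero_mul, add_zero, mul_assoc, ← Finset.mul_sum, ← mul_add]
      exact (mul_div_mul_left _ _ two_ne_zero).symm

lemma hasDerivAt_Fgresh_line {n p : ℕ} (X : Matrix (Fin n) (Fin p) ℝ) (y : Fin n → ℝ)
    (lam1 lam2 : ℝ) (b δb : Fin p → ℝ) (Φ δΦ : Matrix (Fin p) (Fin p) ℝ)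
    (hb : ∀ j, δb j ≠ 0 → b j ≠ 0) (hΦ : ∀ j k, δΦ j k ≠ 0 → Φ j k ≠ 0) :
    HasDerivAt (fun t : ℝ => Fgresh X y lam1 lam2 (b + t • δb) (Φ + t • δΦ))
      (∑ i, Mmap X δb δΦ i * (Mmap X b Φ i - y i)
        + lam1 * specNorm (Xbreve X) * ∑ j, ∑ k, SignType.sign (Φ j k) * δΦ j k
        + lam2 * specNorm (Xbreve X) *
          ∑ j, (b j * δb j + ∑ k, Φ k j * δΦ k j) / grpNorm b Φ j) 0 := by
  have hloss : HasDerivAt (fun t : ℝ => ∑ i, (y i - Mmap X (b + t • δb) (Φ + t • δΦ) i) ^ 2)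
      (2 * ∑ i, Mmap X δb δΦ i * (Mmap X b Φ i - y i)) 0 := by
    refine ((HasDerivAt.fun_sum (u := .univ) fun i _ => hasDerivAt_add_mul_sq (y i - Mmap X b Φ i)
      (-Mmap X δb δΦ i)).congr_of_eventuallyEq (.of_forall fun t => ?_)).congr_deriv ?_
    · exact Finset.sum_congr rfl fun i _ => by rw [Mmap_add_smul]; ring
    · exact (Finset.mul_sum ..).trans (Finset.sum_congr rfl fun i _ => by ring) |>.symm
  have hl1 : HasDerivAt (fun t : ℝ => ∑ j, ∑ k, |(Φ + t • δΦ) j k|)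
      (∑ j, ∑ k, SignType.sign (Φ j k) * δΦ j k) 0 :=
    HasDerivAt.fun_sum fun j _ => HasDerivAt.fun_sum fun k _ => by
      simpa [mul_comm] using hasDerivAt_abs_add_mul (hΦ j k)
  have hgrp : HasDerivAt (fun t : ℝ => ∑ j, grpNorm (b + t • δb) (Φ + t • δΦ) j)
      (∑ j, (b j * δb j + ∑ k, Φ k j * δΦ k j) / grpNorm b Φ j) 0 :=
    HasDerivAt.fun_sum fun j _ => hasDerivAt_grpNorm_line b δb Φ δΦ j fun hN =>
      have h0 := grpNorm_eq_zero_iff.mp hN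
      ⟨not_imp_not.mp (hb j) h0.1, fun k => not_imp_not.mp (hΦ k j) (h0.2 k)⟩
  exact (((hloss.const_mul (1 / 2)).fun_add (hl1.const_mul _)).fun_add
    (hgrp.const_mul _)).congr_deriv (by ring)

def IsGreshMinimizer {n p : ℕ} (X : Matrix (Fin n) (Fin p) ℝ) (y : Fin n → ℝ) (lam1 lam2 : ℝ)
    (bh : Fin p → ℝ) (Φh : Matrix (Fin p) (Fin p) ℝ) : Prop :=
  ∀ (b : Fin p → ℝ) (Φ : Matrix (Fin p) (Fin p) ℝ), Φ = Φᵀ →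
    Fgresh X y lam1 lam2 bh Φh ≤ Fgresh X y lam1 lam2 b Φ

section Minimizer

variable {n p : ℕ} {X : Matrix (Fin n) (Fin p) ℝ} {y : Fin n → ℝ} {lam1 lam2 : ℝ}
  {bh : Fin p → ℝ} {Φh : Matrix (Fin p) (Fin p) ℝ}

theorem IsGreshMinimizer.lineDeriv_eq_zero (hmin : IsGreshMinimizer X y lam1 lam2 bh Φh)
    (hsym : Φh.IsSymm) {δb : Fin p → ℝ}
    {δΦ : Matrix (Fin p) (Fin p) ℝ} (hδ : δΦ.IsSymm)
    (hb : ∀ j, δb j ≠ 0 → bh j ≠ 0) (hΦ : ∀ j k, δΦ j k ≠ 0 → Φh j k ≠ 0) :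
    ∑ i, Mmap X δb δΦ i * (Mmap X bh Φh i - y i)
        + lam1 * specNorm (Xbreve X) * ∑ j, ∑ k, SignType.sign (Φh j k) * δΦ j k
        + lam2 * specNorm (Xbreve X) *
          ∑ j, (bh j * δb j + ∑ k, Φh k j * δΦ k j) / grpNorm bh Φh j = 0 := by
  refine IsLocalMin.hasDerivAt_eq_zero (.of_forall fun t => ?_)
    (hasDerivAt_Fgresh_line X y lam1 lam2 bh δb Φh δΦ hb hΦ)
  simpa using hmin _ _ (hsym.add (hδ.smul t)).eq.symm

theorem IsGreshMinimizer.grad_mainEffect_eq (hmin : IsGreshMinimizer X y lam1 lam2 bh Φh)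
    (hsym : Φh.IsSymm) {j : Fin p} (hbj : bh j ≠ 0) :
    ∑ i, X i j * (Mmap X bh Φh i - y i)
      = -(lam2 * specNorm (Xbreve X) * bh j / grpNorm bh Φh j) := by
  have hsupp : ∀ l, (Pi.single j 1 : Fin p → ℝ) l ≠ 0 → bh l ≠ 0 := fun l hl => by
    rcases eq_or_ne l j with rfl | hlj
    · exact hbj
    · simp [hlj] at hl
  have h := hmin.lineDeriv_eq_zero hsym isSymm_zero hsupp (by simp)
  simp only [Mmap_single_zero, Matrix.zero_apply, mul_zero, Finset.sum_const_zero, add_zero,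
    Pi.single_apply, mul_ite, mul_one, ite_div, zero_div, Finset.sum_ite_eq', Finset.mem_univ,
    ↓reduceIte] at h
  linear_combination h

theorem IsGreshMinimizer.grad_interaction_eq (hmin : IsGreshMinimizer X y lam1 lam2 bh Φh)
    (hsym : Φh.IsSymm) {j k : Fin p} (hjk : Φh j k ≠ 0) :
    2 * ∑ i, X i j * X i k * (Mmap X bh Φh i - y i)
      + 2 * lam1 * specNorm (Xbreve X) * SignType.sign (Φh j k)
      + lam2 * specNorm (Xbreve X) * Φh j k * (1 / grpNorm bh Φh j + 1 / grpNorm bh Φh k)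
      = 0 := by
  have hkj : Φh k j = Φh j k := hsym.apply j k
  have h := hmin.lineDeriv_eq_zero hsym (δb := 0)
    (δΦ := single j k 1 + single k j 1) (by simp [IsSymm, transpose_single, add_comm])
    (by simp) fun a c hac => by
      rcases em (j = a ∧ k = c) with ⟨rfl, rfl⟩ | h1
      · exact hjk
      rcases em (k = a ∧ j = c) with ⟨rfl, rfl⟩ | h2
      · rwa [hkj]
      simp [h1, h2] at hac
  simp only [Mmap_zero_single_add_single, Matrix.add_apply, single_apply, ite_and, mul_add,
    mul_ite, mul_one, mul_zero, Finset.sum_add_distrib, Finset.sum_ite_irrel, Finset.sum_ite_eq,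
    Finset.mem_univ, ↓reduceIte, Finset.sum_const_zero, hkj, Pi.zero_apply, zero_add, add_div,
    ite_div, zero_div, mul_assoc] at h ⊢
  rw [← Finset.mul_sum] at h
  linear_combination h

theorem IsGreshMinimizer.sq_grad_mainEffect (hmin : IsGreshMinimizer X y lam1 lam2 bh Φh)
    (hsym : Φh.IsSymm) {j : Fin p} (hbj : bh j ≠ 0) :
    (∑ i, X i j * (Mmap X bh Φh i - y i)) ^ 2
      = (lam2 * specNorm (Xbreve X)) ^ 2 * (bh j ^ 2 / grpNorm bh Φh j ^ 2) := by
  rw [hmin.grad_mainEffect_eq hsym hbj]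
  ring

theorem IsGreshMinimizer.sq_grad_interaction_ge (hmin : IsGreshMinimizer X y lam1 lam2 bh Φh)
    (hsym : Φh.IsSymm) (h1 : 0 ≤ lam1) (h2 : 0 ≤ lam2)
    (hs : 0 ≤ specNorm (Xbreve X)) {j k : Fin p} (hjk : Φh j k ≠ 0) :
    (lam1 * specNorm (Xbreve X)) ^ 2 + (lam2 * specNorm (Xbreve X)) ^ 2 / 4 *
        (Φh j k ^ 2 / grpNorm bh Φh j ^ 2 + Φh j k ^ 2 / grpNorm bh Φh k ^ 2)
      ≤ (∑ i, X i j * X i k * (Mmap X bh Φh i - y i)) ^ 2 := by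
  have hkkt := hmin.grad_interaction_eq hsym hjk
  set G := ∑ i, X i j * X i k * (Mmap X bh Φh i - y i)
  set u := lam1 * specNorm (Xbreve X)
  set v := lam2 * specNorm (Xbreve X)
  set σ : ℝ := (SignType.sign (Φh j k) : ℝ)
  set a := 1 / grpNorm bh Φh j
  set c := 1 / grpNorm bh Φh k
  have hσ : σ * Φh j k = |Φh j k| := sign_mul_self _
  have hexpand : G ^ 2 - (u ^ 2 + v ^ 2 / 4 * (Φh j k ^ 2 / grpNorm bh Φh j ^ 2
        + Φh j k ^ 2 / grpNorm bh Φh k ^ 2))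
      = u * v * |Φh j k| * (a + c) + v ^ 2 * Φh j k ^ 2 * a * c / 2 := by
    linear_combination (G - u * σ - v * Φh j k * (a + c) / 2) / 2 * hkkt
      + u ^ 2 * sign_sq_of_ne_zero hjk + u * v * (a + c) * hσ
  have hu : 0 ≤ u := mul_nonneg h1 hs
  have hv : 0 ≤ v := mul_nonneg h2 hs
  have ha : 0 ≤ a := one_div_nonneg.mpr (grpNorm_nonneg ..)
  have hc : 0 ≤ c := one_div_nonneg.mpr (grpNorm_nonneg ..)
  have hcross : 0 ≤ u * v * |Φh j k| * (a + c) + v ^ 2 * Φh j k ^ 2 * a * c / 2 := by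
    positivity
  linarith

theorem IsGreshMinimizer.card_le_sum_sq_grad (hmin : IsGreshMinimizer X y lam1 lam2 bh Φh)
    (hsym : Φh.IsSymm) (h1 : 0 ≤ lam1) (h2 : 0 ≤ lam2)
    (hs : 0 ≤ specNorm (Xbreve X)) :
    specNorm (Xbreve X) ^ 2 * (lam1 ^ 2 * JeCount Φh + lam2 ^ 2 * JGCount bh Φh / 2)
      ≤ ∑ j ∈ Finset.univ.filter (fun j => bh j ≠ 0),
            (∑ i, X i j * (Mmap X bh Φh i - y i)) ^ 2
        + ∑ jk ∈ Finset.univ.filter (fun jk : Fin p × Fin p => Φh jk.1 jk.2 ≠ 0),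
            (∑ i, X i jk.1 * X i jk.2 * (Mmap X bh Φh i - y i)) ^ 2 := by
  have hmain : ∑ j ∈ Finset.univ.filter (fun j => bh j ≠ 0),
      (∑ i, X i j * (Mmap X bh Φh i - y i)) ^ 2
        = (lam2 * specNorm (Xbreve X)) ^ 2 * ∑ j, bh j ^ 2 / grpNorm bh Φh j ^ 2 := by
    have hsupp : ∀ j ∈ Finset.univ, bh j ^ 2 / grpNorm bh Φh j ^ 2 ≠ 0 → bh j ≠ 0 :=
      fun j _ h hj => h (by simp [hj])
    rw [Finset.sum_congr rfl fun j hj => hmin.sq_grad_mainEffect hsym (Finset.mem_filter.mp hj).2,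
      ← Finset.mul_sum, Finset.sum_filter_of_ne hsupp]
  have hinter : (lam1 * specNorm (Xbreve X)) ^ 2 * JeCount Φh
        + (lam2 * specNorm (Xbreve X)) ^ 2 / 4 * ∑ jk : Fin p × Fin p,
          (Φh jk.1 jk.2 ^ 2 / grpNorm bh Φh jk.1 ^ 2 + Φh jk.1 jk.2 ^ 2 / grpNorm bh Φh jk.2 ^ 2)
      ≤ ∑ jk ∈ Finset.univ.filter (fun jk : Fin p × Fin p => Φh jk.1 jk.2 ≠ 0),
          (∑ i, X i jk.1 * X i jk.2 * (Mmap X bh Φh i - y i)) ^ 2 := by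
    have hsupp : ∀ jk : Fin p × Fin p, jk ∈ Finset.univ → (Φh jk.1 jk.2 ^ 2 / grpNorm bh Φh jk.1 ^ 2
        + Φh jk.1 jk.2 ^ 2 / grpNorm bh Φh jk.2 ^ 2) ≠ 0 → Φh jk.1 jk.2 ≠ 0 :=
      fun jk _ h hjk => h (by simp [hjk])
    rw [← Finset.sum_filter_of_ne hsupp, Finset.mul_sum, JeCount, mul_comm, ← nsmul_eq_mul,
      ← Finset.sum_const, ← Finset.sum_add_distrib]
    exact Finset.sum_le_sum fun jk hjk =>
      hmin.sq_grad_interaction_ge hsym h1 h2 hs (Finset.mem_filter.mp hjk).2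
  have hgroup : ∑ j, (2 * bh j ^ 2 + ∑ k, Φh k j ^ 2) / grpNorm bh Φh j ^ 2
      = 2 * ∑ j, bh j ^ 2 / grpNorm bh Φh j ^ 2
        + ∑ j, (∑ k, Φh k j ^ 2) / grpNorm bh Φh j ^ 2 := by
    simp only [add_div, Finset.sum_add_distrib, mul_div_assoc, Finset.mul_sum]
  have hJG := mul_le_mul_of_nonneg_left (JGCount_le bh Φh)
    (sq_nonneg (lam2 * specNorm (Xbreve X)))
  rw [sum_sq_div_grpNorm_sq bh hsym] at hinter
  rw [hgroup] at hJG
  linarith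

end Minimizer

theorem gresh_kkt_cardinality_general {n p : ℕ}
    (X : Matrix (Fin n) (Fin p) ℝ) (y : Fin n → ℝ) (hX : Xbreve X ≠ 0)
    (lam1 lam2 : ℝ) (h1 : 0 < lam1) (h2 : 0 < lam2)
    (bh : Fin p → ℝ) (Φh : Matrix (Fin p) (Fin p) ℝ) (hsym : Φh = Φhᵀ)
    (hmin : ∀ (b : Fin p → ℝ) (Φ : Matrix (Fin p) (Fin p) ℝ), Φ = Φᵀ →
      Fgresh X y lam1 lam2 bh Φh ≤ Fgresh X y lam1 lam2 b Φ) :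
    lam1 ^ 2 * (JeCount Φh : ℝ) + lam2 ^ 2 * (JGCount bh Φh : ℝ)
      ≤ (2 / specNorm (Xbreve X) ^ 2) *
          ∑ u ∈ Finset.univ.filter (fun u : Fin p × Fin (p + 1) => vecBF bh Φh u ≠ 0),
            (∑ i, Xbreve X i u * ((Xbreve X).mulVec (vecBF bh Φh) i - y i)) ^ 2 := by
  have hs := specNorm_pos hX
  have hbound := IsGreshMinimizer.card_le_sum_sq_grad hmin hsym.symm h1.le h2.le hs.le
  rw [Xbreve_mulVec_vecBF, sum_filter_vecBF_ne_zero]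
  simp only [Xbreve, Fin.cases_zero, Fin.cases_succ]
  rw [div_mul_eq_mul_div, le_div_iff₀ (by positivity)]
  have : 0 ≤ specNorm (Xbreve X) ^ 2 * (lam1 ^ 2 * JeCount Φh) := by positivity
  linarith

/-- **KKT cardinality inequality for Type-A GRESH minimizers** (key optimization
inequality in the proof of Theorem 2):
`λ₁² J_e(Φ̂) + λ₂² J_G(b̂, Φ̂) ≤ (2/‖X̆‖₂²)‖X̆_Ĵᵀ(X̆ vec(Ω̂) − y)‖₂²`,
where `Ĵ` is the support of `vec(Ω̂)`. -/
theorem gresh_kkt_cardinality {n p : ℕ} (hn : 1 ≤ n) (hp : 1 ≤ p)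
    (X : Matrix (Fin n) (Fin p) ℝ) (y : Fin n → ℝ) (hX : Xbreve X ≠ 0)
    (lam1 lam2 : ℝ) (h1 : 0 < lam1) (h2 : 0 < lam2)
    (bh : Fin p → ℝ) (Φh : Matrix (Fin p) (Fin p) ℝ) (hsym : Φh = Φhᵀ)
    (hmin : ∀ (b : Fin p → ℝ) (Φ : Matrix (Fin p) (Fin p) ℝ), Φ = Φᵀ →
      Fgresh X y lam1 lam2 bh Φh ≤ Fgresh X y lam1 lam2 b Φ) :
    lam1 ^ 2 * (JeCount Φh : ℝ) + lam2 ^ 2 * (JGCount bh Φh : ℝ)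
      ≤ (2 / specNorm (Xbreve X) ^ 2) *
          ∑ u ∈ Finset.univ.filter (fun u : Fin p × Fin (p + 1) => vecBF bh Φh u ≠ 0),
            (∑ i, Xbreve X i u * ((Xbreve X).mulVec (vecBF bh Φh) i - y i)) ^ 2 :=
  gresh_kkt_cardinality_general X y hX lam1 lam2 h1 h2 bh Φh hsym hmin
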